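/- arXiv:2009.00235 — 7 statements merged into one kernel-verified Lean document; each statement's English description precedes it below -/
import Mathlib

section
/- (Lemma 1(ii)) In the additive fitness model at time t ≥ 2, the expected one-step change in the visibility of node i, conditioned on the current graph and the fitness ξ_new of the incoming node, satisfies the exact identity ∑_{s∈V} ((ξ_s + D(s))/(Ξ + 2(t−1))) · ((ξ_i + D(i) + 1{s=i})/(Ξ + ξ_new + 2t)) − (ξ_i + D(i))/(Ξ + 2(t−1)) = −(ξ_i + D(i))(ξ_new + 1)/((Ξ + 2(t−1))(Ξ + ξ_new + 2t)). -/
open Finset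

/-- Lemma 1(ii): in the additive fitness model at time `t ≥ 2`, the expected one-step
change in the visibility of node `i`, conditioned on the current graph and the fitness
`ξ_new` of the incoming node, equals
`-(ξ i + D i)(ξ_new + 1)/((Ξ + 2(t-1))(Ξ + ξ_new + 2t))`. -/
theorem af_expected_visibility_change
    {V : Type*} [Fintype V] [DecidableEq V] (t : ℕ) (ht : 2 ≤ t)
    (D : V → ℕ) (hD : ∑ j, D j = 2 * (t - 1))
    (ξ : V → ℝ) (hξ : ∀ j, 0 < ξ j)
    (Ξ : ℝ) (hΞ : Ξ = ∑ j, ξ j)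
    (ξnew : ℝ) (hξnew : 0 < ξnew) (i : V) :
    (∑ s, ((ξ s + (D s : ℝ)) / (Ξ + 2 * ((t : ℝ) - 1)))
          * ((ξ i + (D i : ℝ) + if s = i then 1 else 0) / (Ξ + ξnew + 2 * t)))
        - (ξ i + (D i : ℝ)) / (Ξ + 2 * ((t : ℝ) - 1))
      = - ((ξ i + (D i : ℝ)) * (ξnew + 1))
          / ((Ξ + 2 * ((t : ℝ) - 1)) * (Ξ + ξnew + 2 * t)) := by
  have hΞpos : 0 < Ξ := by
    rw [hΞ]
    have : Nonempty V := by
      by_contra h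
      simp [not_nonempty_iff.mp h] at hD
      omega
    exact Finset.sum_pos (fun j _ => hξ j) Finset.univ_nonempty
  set A := Ξ + 2 * ((t : ℝ) - 1) with hA
  set B := Ξ + ξnew + 2 * (t : ℝ) with hB
  have ht1 : (1:ℝ) ≤ (t:ℝ) := by exact_mod_cast Nat.one_le_of_lt ht
  have hApos : 0 < A := by rw [hA]; nlinarith
  have hBpos : 0 < B := by rw [hB]; positivity
  have hsumD : (∑ j, (D j : ℝ)) = 2 * ((t:ℝ) - 1) := by
    rw [← Nat.cast_sum]
    rw [hD]
    have : (1:ℕ) ≤ t := by omega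
    push_cast [Nat.cast_sub this]
    ring
  have hsum : (∑ s, (ξ s + (D s : ℝ))) = A := by
    rw [Finset.sum_add_distrib, hsumD, hA, hΞ]
  have key : (∑ s, ((ξ s + (D s : ℝ)) / A)
          * ((ξ i + (D i : ℝ) + if s = i then 1 else 0) / B))
      = A * (ξ i + (D i : ℝ)) / (A * B) + (ξ i + (D i : ℝ)) / (A * B) := by
    have : ∀ s, ((ξ s + (D s : ℝ)) / A)
          * ((ξ i + (D i : ℝ) + if s = i then 1 else 0) / B)
        = (ξ s + (D s : ℝ)) * (ξ i + (D i : ℝ)) / (A * B)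
          + (if s = i then (ξ i + (D i : ℝ)) / (A * B) else 0) := by
      intro s
      by_cases h : s = i <;> simp [h] <;> field_simp <;> ring
    rw [Finset.sum_congr rfl (fun s _ => this s), Finset.sum_add_distrib,
      Finset.sum_ite_eq' Finset.univ i, ← Finset.sum_div, ← Finset.sum_mul, hsum]
    simp
  rw [key]
  field_simp
  ring
end

section
/- In the multiplicative fitness model, the expected one-step change in the visibility of node i, conditioned on the current graph and the fitness ξ_new of the incoming node, satisfies the exact identity ∑_{ℓ∈V} (ξ_ℓ D(ℓ)/ψ) · (ξ_i(D(i) + 1{ℓ=i})/(ψ + ξ_ℓ + ξ_new)) − ξ_i D(i)/ψ = (ξ_i D(i)/ψ) · [ ξ_i(ψ − D(i)(ξ_i + ξ_new))/(ψ(ψ + ξ_i + ξ_new)) − ∑_{ℓ≠i} ξ_ℓ D(ℓ)(ξ_ℓ + ξ_new)/(ψ(ψ + ξ_ℓ + ξ_new)) ]. -/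
/-! The attachment probabilities `ξ_ℓ D(ℓ)/ψ` sum to one, so the current visibility of `i` can be
moved inside the expectation. The term `ℓ = i` and the terms `ℓ ≠ i` then simplify separately,
the latter through `1/(ψ + ξ_ℓ + ξ_new) - 1/ψ = -(ξ_ℓ + ξ_new)/(ψ (ψ + ξ_ℓ + ξ_new))`. -/

open Finset

theorem Finset.sum_div_mul_sub_const {ι K : Type*} [Field K] {s : Finset ι} {w : ι → K} {ψ : K}
    (hw : ∑ j ∈ s, w j = ψ) (hψ : ψ ≠ 0) (f : ι → K) (c : K) :
    ∑ ℓ ∈ s, w ℓ / ψ * f ℓ - c = ∑ ℓ ∈ s, w ℓ / ψ * (f ℓ - c) := by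
  have hmass : ∑ ℓ ∈ s, w ℓ / ψ = 1 := by rw [← sum_div, hw, div_self hψ]
  simp only [mul_sub, sum_sub_distrib, ← sum_mul, hmass, one_mul]

section VisibilityChange

variable {K : Type*} [Field K] {ψ x y : K}

theorem visibility_change_of_attach_elsewhere (hψ : ψ ≠ 0) (hd : ψ + x + y ≠ 0) (a b : K) :
    a / ψ * (b / (ψ + x + y) - b / ψ) = -(b / ψ * (a * (x + y) / (ψ * (ψ + x + y)))) := by
  field_simp
  ring

theorem visibility_change_of_attach_self (hψ : ψ ≠ 0) (hd : ψ + x + y ≠ 0) (n : K) :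
    x * n / ψ * (x * (n + 1) / (ψ + x + y) - x * n / ψ)
      = x * n / ψ * (x * (ψ - n * (x + y)) / (ψ * (ψ + x + y))) := by
  field_simp
  ring

end VisibilityChange

/-- In the multiplicative fitness model, the expected one-step change in the visibility of
node `i`, conditioned on the current graph and the fitness `ξ_new` of the incoming node,
satisfies the stated exact identity. -/
theorem mf_expected_visibility_change_exact
    {V : Type*} [Fintype V] [DecidableEq V]
    (D : V → ℕ) (hD : ∀ j, 1 ≤ D j)
    (ξ : V → ℝ) (hξ : ∀ j, 0 < ξ j)
    (ψ : ℝ) (hψ : ψ = ∑ j, ξ j * (D j : ℝ))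
    (ξnew : ℝ) (hξnew : 0 < ξnew) (i : V) :
    (∑ ℓ, (ξ ℓ * (D ℓ : ℝ) / ψ)
          * (ξ i * ((D i : ℝ) + if ℓ = i then 1 else 0) / (ψ + ξ ℓ + ξnew)))
        - ξ i * (D i : ℝ) / ψ
      = (ξ i * (D i : ℝ) / ψ) *
          (ξ i * (ψ - (D i : ℝ) * (ξ i + ξnew)) / (ψ * (ψ + ξ i + ξnew))
            - ∑ ℓ ∈ univ.erase i,
                ξ ℓ * (D ℓ : ℝ) * (ξ ℓ + ξnew) / (ψ * (ψ + ξ ℓ + ξnew))) := by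
  have hψ_pos : 0 < ψ := hψ ▸ sum_pos
    (fun j _ => mul_pos (hξ j) (Nat.cast_pos.mpr (hD j))) ⟨i, mem_univ i⟩
  have hden : ∀ ℓ, ψ + ξ ℓ + ξnew ≠ 0 := fun ℓ => by linarith [hξ ℓ]
  rw [sum_div_mul_sub_const hψ.symm hψ_pos.ne', ← add_sum_erase _ _ (mem_univ i)]
  conv_rhs => rw [mul_sub, mul_sum, sub_eq_add_neg, ← sum_neg_distrib]
  congr 1
  · simpa using visibility_change_of_attach_self hψ_pos.ne' (hden i) (D i : ℝ)
  · refine sum_congr rfl fun ℓ hℓ => ?_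
    rw [if_neg (ne_of_mem_erase hℓ), add_zero, visibility_change_of_attach_elsewhere hψ_pos.ne'
      (hden ℓ), mul_div_assoc]
end

section
/- (Rigorous form of Lemma 1(iii)) In the multiplicative fitness model, the expected one-step change in the visibility of node i, conditioned on the current graph and the fitness ξ_new of the incoming node, is bounded below as follows: ∑_{ℓ∈V} (ξ_ℓ D(ℓ)/ψ) · (ξ_i(D(i) + 1{ℓ=i})/(ψ + ξ_ℓ + ξ_new)) − ξ_i D(i)/ψ ≥ (ξ_i D(i)/ψ) · [ ξ_i(ψ − D(i)(ξ_i + ξ_new))/(ψ(ψ + ξ_i + ξ_new)) − (1/ψ²)·∑_{ℓ≠i} ξ_ℓ D(ℓ)(ξ_ℓ + ξ_new) ]. In particular the expected change can be positive when ξ_i is sufficiently large relative to the rest of the network. -/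
open Finset

/-- Rigorous form of Lemma 1(iii): in the multiplicative fitness model, the expected
one-step change in the visibility of node `i`, conditioned on the current graph and the
fitness `ξ_new` of the incoming node, is bounded below by
`(ξ i · D i/ψ) · [ξ i (ψ - D i (ξ i + ξ_new))/(ψ(ψ + ξ i + ξ_new))
   - (1/ψ²)·∑_{ℓ≠i} ξ ℓ D ℓ (ξ ℓ + ξ_new)]`. -/
theorem mf_expected_visibility_change_lower_bound
    {V : Type*} [Fintype V] [DecidableEq V]
    (D : V → ℕ) (hD : ∀ j, 1 ≤ D j)
    (ξ : V → ℝ) (hξ : ∀ j, 0 < ξ j)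
    (ψ : ℝ) (hψ : ψ = ∑ j, ξ j * (D j : ℝ))
    (ξnew : ℝ) (hξnew : 0 < ξnew) (i : V) :
    (∑ ℓ, (ξ ℓ * (D ℓ : ℝ) / ψ)
          * (ξ i * ((D i : ℝ) + if ℓ = i then 1 else 0) / (ψ + ξ ℓ + ξnew)))
        - ξ i * (D i : ℝ) / ψ
      ≥ (ξ i * (D i : ℝ) / ψ) *
          (ξ i * (ψ - (D i : ℝ) * (ξ i + ξnew)) / (ψ * (ψ + ξ i + ξnew))
            - (1 / ψ ^ 2) *
                ∑ ℓ ∈ univ.erase i, ξ ℓ * (D ℓ : ℝ) * (ξ ℓ + ξnew)) := by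
  have hDpos : ∀ j, (0:ℝ) < (D j : ℝ) := fun j => by
    exact_mod_cast Nat.lt_of_lt_of_le Nat.zero_lt_one (hD j)
  have hψpos : 0 < ψ := by
    rw [hψ]
    exact Finset.sum_pos (fun j _ => mul_pos (hξ j) (hDpos j)) ⟨i, mem_univ i⟩
  have hψne : ψ ≠ 0 := ne_of_gt hψpos
  have hden : ∀ ℓ, 0 < ψ + ξ ℓ + ξnew := fun ℓ =>
    add_pos (add_pos hψpos (hξ ℓ)) hξnew
  have hdenne : ∀ ℓ, ψ + ξ ℓ + ξnew ≠ 0 := fun ℓ => ne_of_gt (hden ℓ)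
  set g : V → ℝ := fun ℓ =>
    (ξ ℓ * (D ℓ : ℝ) / ψ) * (ξ i * ((D i : ℝ) + if ℓ = i then 1 else 0) / (ψ + ξ ℓ + ξnew))
      - (ξ ℓ * (D ℓ : ℝ) / ψ) * (ξ i * (D i : ℝ) / ψ) with hg
  set h : V → ℝ := fun ℓ =>
    if ℓ = i then
      (ξ i * (D i : ℝ) / ψ) * (ξ i * (ψ - (D i : ℝ) * (ξ i + ξnew)) / (ψ * (ψ + ξ i + ξnew)))
    else - ((ξ i * (D i : ℝ) / ψ) * ((1 / ψ ^ 2) * (ξ ℓ * (D ℓ : ℝ) * (ξ ℓ + ξnew)))) with hh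
  have hL : (∑ ℓ, (ξ ℓ * (D ℓ : ℝ) / ψ)
          * (ξ i * ((D i : ℝ) + if ℓ = i then 1 else 0) / (ψ + ξ ℓ + ξnew)))
        - ξ i * (D i : ℝ) / ψ = ∑ ℓ, g ℓ := by
    rw [Finset.sum_sub_distrib]
    congr 1
    rw [← Finset.sum_mul, ← Finset.sum_div, ← hψ, div_self hψne, one_mul]
  have hR : (ξ i * (D i : ℝ) / ψ) *
          (ξ i * (ψ - (D i : ℝ) * (ξ i + ξnew)) / (ψ * (ψ + ξ i + ξnew))
            - (1 / ψ ^ 2) *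
                ∑ ℓ ∈ univ.erase i, ξ ℓ * (D ℓ : ℝ) * (ξ ℓ + ξnew)) = ∑ ℓ, h ℓ := by
    rw [← Finset.add_sum_erase (univ : Finset V) h (mem_univ i)]
    have h1 : h i = (ξ i * (D i : ℝ) / ψ) *
        (ξ i * (ψ - (D i : ℝ) * (ξ i + ξnew)) / (ψ * (ψ + ξ i + ξnew))) := by
      simp [hh]
    have h2 : ∑ ℓ ∈ univ.erase i, h ℓ
        = - ((ξ i * (D i : ℝ) / ψ) * ((1 / ψ ^ 2) *
            ∑ ℓ ∈ univ.erase i, ξ ℓ * (D ℓ : ℝ) * (ξ ℓ + ξnew))) := by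
      rw [Finset.mul_sum, Finset.mul_sum, ← Finset.sum_neg_distrib]
      refine Finset.sum_congr rfl fun ℓ hℓ => ?_
      rw [hh]
      simp [Finset.ne_of_mem_erase hℓ]
    rw [h1, h2]
    ring
  rw [hL, hR]
  refine Finset.sum_le_sum fun ℓ _ => ?_
  by_cases hcase : ℓ = i
  · subst hcase
    have d1 : ψ ≠ 0 := hψne
    have d2 : ψ + ξ ℓ + ξnew ≠ 0 := hdenne ℓ
    have this : (ξ ℓ * (D ℓ : ℝ) / ψ) * (ξ ℓ * ((D ℓ : ℝ) + 1) / (ψ + ξ ℓ + ξnew))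
        - (ξ ℓ * (D ℓ : ℝ) / ψ) * (ξ ℓ * (D ℓ : ℝ) / ψ)
        = (ξ ℓ * (D ℓ : ℝ) / ψ) *
          (ξ ℓ * (ψ - (D ℓ : ℝ) * (ξ ℓ + ξnew)) / (ψ * (ψ + ξ ℓ + ξnew))) := by
      field_simp
      ring
    simp only [hg, hh]
    simp only [if_true]
    exact le_of_eq this.symm
  · rw [hg, hh, ← sub_nonneg]
    simp only [if_neg hcase]
    have d1 : ψ ≠ 0 := hψne
    have d2 : ψ + ξ ℓ + ξnew ≠ 0 := hdenne ℓ
    have key : (ξ ℓ * (D ℓ : ℝ) / ψ) * (ξ i * ((D i : ℝ) + 0) / (ψ + ξ ℓ + ξnew))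
        - (ξ ℓ * (D ℓ : ℝ) / ψ) * (ξ i * (D i : ℝ) / ψ)
        - (- ((ξ i * (D i : ℝ) / ψ) * ((1 / ψ ^ 2) * (ξ ℓ * (D ℓ : ℝ) * (ξ ℓ + ξnew)))))
        = ξ i * (D i : ℝ) * (ξ ℓ * (D ℓ : ℝ)) * (ξ ℓ + ξnew) ^ 2
            / (ψ ^ 3 * (ψ + ξ ℓ + ξnew)) := by
      field_simp
      ring
    rw [key]
    apply div_nonneg
    · exact mul_nonneg (mul_nonneg (mul_nonneg (hξ i).le (hDpos i).le)
        (mul_nonneg (hξ ℓ).le (hDpos ℓ).le)) (sq_nonneg _)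
    · exact (mul_pos (pow_pos hψpos 3) (hden ℓ)).le
end

section
/- (Exact form of Lemma 2) In the general fitness model, the expected one-step change in the visibility of node i, conditioned on the current graph and the fitness of the incoming node, satisfies the exact identity ∑_{s∈V} (g_s/Γ) · (g(ξ_i, D(i) + 1{s=i})/(Γ + Δ_s + g_new)) − g_i/Γ = (g_i/Γ) · ((∑_{j≠i} g_j)·Δ_i − g_new·g_i)/(Γ·(Γ + Δ_i + g_new)) − ∑_{k≠i} (g_k/Γ) · g_i·(Δ_k + g_new)/(Γ·(Γ + Δ_k + g_new)). -/
/-!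
The attachment probabilities `g_s / Γ` sum to one, so the expected change of the visibility
of `i` is the probability-weighted average of its changes over the possible targets `s`.
If `s ≠ i` only the total weight grows, by `Δ_s + g_new`, and the visibility drops by
`g_i (Δ_s + g_new) / (Γ (Γ + Δ_s + g_new))`; if `s = i` the numerator also grows by `Δ_i`,
and since `Γ - g_i = ∑_{j ≠ i} g_j` the change is
`((∑_{j ≠ i} g_j) Δ_i - g_new g_i) / (Γ (Γ + Δ_i + g_new))`.
-/

open Finset

section Field

variable {K : Type*} [Field K]

theorem div_add_add_sub_div (a Γ d c : K) (hΓ : Γ ≠ 0) (hb : Γ + d + c ≠ 0) :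
    a / (Γ + d + c) - a / Γ = -(a * (d + c) / (Γ * (Γ + d + c))) := by
  field_simp
  ring

theorem div_add_sub_add_sub_div (a b Γ c : K) (hΓ : Γ ≠ 0) (hb : Γ + (b - a) + c ≠ 0) :
    b / (Γ + (b - a) + c) - a / Γ = ((Γ - a) * (b - a) - c * a) / (Γ * (Γ + (b - a) + c)) := by
  field_simp
  ring

theorem sum_div_mul_sub_eq_add_sum_erase {V : Type*} [Fintype V] [DecidableEq V]
    (w x : V → K) (y Γ : K) (hΓ : Γ = ∑ j, w j) (hΓ0 : Γ ≠ 0) (i : V) :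
    ∑ s, w s / Γ * x s - y
      = w i / Γ * (x i - y) + ∑ k ∈ univ.erase i, w k / Γ * (x k - y) := by
  have hprob : ∑ s, w s / Γ = 1 := by rw [← sum_div, ← hΓ, div_self hΓ0]
  rw [add_sum_erase univ (fun s => w s / Γ * (x s - y)) (mem_univ i)]
  simp only [mul_sub, sum_sub_distrib, ← sum_mul, hprob, one_mul]

end Field

/-- Exact form of Lemma 2: in the general fitness model, the expected one-step change in
the visibility of node `i`, conditioned on the current graph and the fitness of the
incoming node, satisfies the stated exact identity. -/
theorem gf_expected_visibility_change_exact
    {V : Type*} [Fintype V] [DecidableEq V]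
    (g : ℝ → ℕ → ℝ) (ξ : V → ℝ) (D : V → ℕ)
    (hg : ∀ j, 0 < g (ξ j) (D j))
    (hΔ : ∀ j, g (ξ j) (D j) ≤ g (ξ j) (D j + 1))
    (Γ : ℝ) (hΓ : Γ = ∑ j, g (ξ j) (D j))
    (ξnew : ℝ) (hgnew : 0 < g ξnew 1) (i : V) :
    (∑ s, (g (ξ s) (D s) / Γ)
          * (g (ξ i) (D i + if s = i then 1 else 0)
              / (Γ + (g (ξ s) (D s + 1) - g (ξ s) (D s)) + g ξnew 1)))
        - g (ξ i) (D i) / Γ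
      = (g (ξ i) (D i) / Γ) *
          (((∑ j ∈ univ.erase i, g (ξ j) (D j)) * (g (ξ i) (D i + 1) - g (ξ i) (D i))
              - g ξnew 1 * g (ξ i) (D i))
            / (Γ * (Γ + (g (ξ i) (D i + 1) - g (ξ i) (D i)) + g ξnew 1)))
        - ∑ k ∈ univ.erase i, (g (ξ k) (D k) / Γ)
            * (g (ξ i) (D i) * ((g (ξ k) (D k + 1) - g (ξ k) (D k)) + g ξnew 1)
                / (Γ * (Γ + (g (ξ k) (D k + 1) - g (ξ k) (D k)) + g ξnew 1))) := by
  have hΓpos : 0 < Γ := hΓ ▸ sum_pos (fun j _ => hg j) ⟨i, mem_univ i⟩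
  have hden : ∀ s, Γ + (g (ξ s) (D s + 1) - g (ξ s) (D s)) + g ξnew 1 ≠ 0 := fun s => by
    linarith [hΔ s]
  have hrest : ∑ j ∈ univ.erase i, g (ξ j) (D j) = Γ - g (ξ i) (D i) := by
    rw [sum_erase_eq_sub (mem_univ i), hΓ]
  rw [sum_div_mul_sub_eq_add_sum_erase _ _ _ _ hΓ hΓpos.ne' i, if_pos rfl,
    div_add_sub_add_sub_div _ _ _ _ hΓpos.ne' (hden i), hrest,
    sub_eq_add_neg (_ * _) (∑ k ∈ univ.erase i, _), ← sum_neg_distrib]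
  congr 1
  refine sum_congr rfl fun k hk => ?_
  rw [if_neg (ne_of_mem_erase hk), add_zero, div_add_add_sub_div _ _ _ _ hΓpos.ne' (hden k),
    mul_neg]
end

section
/- (Quantitative version of Lemma 3, local visibility) In the spatial model, suppose the locations are distinct, and let m = min_{j≠i} dist(χ_i, χ_j) > 0. Then for every γ ≥ 0, the local visibility of node i satisfies 1 − p_i^{local}(γ) ≤ (∑_{j≠i} β_j / β_i) · exp(−γ·m). -/
open Finset Real

/-! Since `dist (χ i) (χ i) = 0`, the denominator of `p_i^{local}` is `β i + R` with
`R = ∑_{j ≠ i} exp (-γ dist (χ j) (χ i)) β j`, so `1 - p_i^{local} = R / (β i + R) ≤ R / β i`;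
each term of `R` is damped by at least `exp (-γ m)`. -/

lemma one_sub_div_add_le_div {b r : ℝ} (hb : 0 < b) (hr : 0 ≤ r) : 1 - b / (b + r) ≤ r / b := by
  rw [one_sub_div (by positivity), add_sub_cancel_left]
  exact div_le_div_of_nonneg_left hr hb (le_add_of_nonneg_right hr)

lemma inf'_dist_pos_of_injective {A V : Type*} [MetricSpace A] {χ : V → A}
    (hχ : Function.Injective χ) {s : Finset V} (hs : s.Nonempty) {i : V} (hi : i ∉ s) :
    0 < s.inf' hs fun j => dist (χ i) (χ j) :=
  (lt_inf'_iff hs).2 fun _ hj => dist_pos.2 (hχ.ne (ne_of_mem_of_not_mem hj hi).symm)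

lemma sum_exp_neg_mul_mul_le {V : Type*} {s : Finset V} {d β : V → ℝ} {γ m : ℝ}
    (hβ : ∀ j ∈ s, 0 ≤ β j) (hγ : 0 ≤ γ) (hm : ∀ j ∈ s, m ≤ d j) :
    ∑ j ∈ s, exp (-γ * d j) * β j ≤ (∑ j ∈ s, β j) * exp (-γ * m) := by
  rw [sum_mul]
  refine sum_le_sum fun j hj => ?_
  rw [mul_comm]
  exact mul_le_mul_of_nonneg_left
    (exp_le_exp.2 (mul_le_mul_of_nonpos_left (hm j hj) (neg_nonpos.2 hγ))) (hβ j hj)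

lemma sum_exp_neg_mul_dist_mul_eq_add_sum_erase {A V : Type*} [PseudoMetricSpace A]
    [Fintype V] [DecidableEq V] (χ : V → A) (β : V → ℝ) (γ : ℝ) (i : V) :
    ∑ j, exp (-γ * dist (χ j) (χ i)) * β j
      = β i + ∑ j ∈ univ.erase i, exp (-γ * dist (χ j) (χ i)) * β j := by
  rw [← add_sum_erase _ _ (mem_univ i), dist_self, mul_zero, exp_zero, one_mul]

theorem spatial_local_visibility_quantitative_general
    {A : Type*} [MetricSpace A] {V : Type*} [Fintype V] [DecidableEq V]
    (χ : V → A) (hχ : Function.Injective χ)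
    (β : V → ℝ) (hβ : ∀ j, 0 < β j)
    (γ : ℝ) (hγ : 0 ≤ γ) (i : V)
    (hne : (univ.erase i).Nonempty) (m : ℝ)
    (hm : m = (univ.erase i).inf' hne (fun j => dist (χ i) (χ j))) :
    0 < m ∧
    1 - β i / (∑ j, Real.exp (-γ * dist (χ j) (χ i)) * β j)
      ≤ ((∑ j ∈ univ.erase i, β j) / β i) * Real.exp (-γ * m) := by
  refine ⟨hm ▸ inf'_dist_pos_of_injective hχ hne (notMem_erase i univ), ?_⟩
  have hm_le : ∀ j ∈ univ.erase i, m ≤ dist (χ j) (χ i) := fun j hj =>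
    hm ▸ dist_comm (χ i) (χ j) ▸ inf'_le _ hj
  rw [sum_exp_neg_mul_dist_mul_eq_add_sum_erase]
  calc 1 - β i / (β i + ∑ j ∈ univ.erase i, exp (-γ * dist (χ j) (χ i)) * β j)
      ≤ (∑ j ∈ univ.erase i, exp (-γ * dist (χ j) (χ i)) * β j) / β i :=
        one_sub_div_add_le_div (hβ i) (sum_nonneg fun j _ => by have := hβ j; positivity)
    _ ≤ (∑ j ∈ univ.erase i, β j) * exp (-γ * m) / β i :=
        div_le_div_of_nonneg_right (sum_exp_neg_mul_mul_le (fun j _ => (hβ j).le) hγ hm_le)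
          (hβ i).le
    _ = (∑ j ∈ univ.erase i, β j) / β i * exp (-γ * m) := div_mul_eq_mul_div _ _ _ |>.symm

/-- Quantitative version of Lemma 3 (local visibility): in the spatial model with distinct
node locations, with `m = min_{j ≠ i} dist (χ i) (χ j)` we have `m > 0` and, for every
decay parameter `γ ≥ 0`,
`1 - p_i^{local}(γ) ≤ (∑_{j ≠ i} β j / β i) · exp (-γ m)`. -/
theorem spatial_local_visibility_quantitative
    {A : Type*} [MetricSpace A] {V : Type*} [Fintype V] [DecidableEq V]
    (hV : 2 ≤ Fintype.card V)
    (χ : V → A) (hχ : Function.Injective χ)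
    (β : V → ℝ) (hβ : ∀ j, 0 < β j)
    (γ : ℝ) (hγ : 0 ≤ γ) (i : V)
    (hne : (univ.erase i).Nonempty) (m : ℝ)
    (hm : m = (univ.erase i).inf' hne (fun j => dist (χ i) (χ j))) :
    0 < m ∧
    1 - β i / (∑ j, Real.exp (-γ * dist (χ j) (χ i)) * β j)
      ≤ ((∑ j ∈ univ.erase i, β j) / β i) * Real.exp (-γ * m) :=
  spatial_local_visibility_quantitative_general χ hχ β hβ γ hγ i hne m hm
end

section
/- (Lemma 3, second part) In the spatial model with distinct node locations, the maximum visibility of node i tends to 1 as the decay parameter tends to infinity: the function γ ↦ p_i^{max}(γ) = ⨆_{x∈A} r_i(γ, x) tends to 1 as γ → ∞ (along the atTop filter on ℝ). -/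
open Finset Real Filter

/-! The maximum visibility is squeezed between `1` and the local visibility `r_i(γ, χ_i)`.
At `x = χ_i` every other node sits at positive distance, so its term in the denominator
decays like `exp (-γ · dist)`, leaving `β_i / β_i = 1` in the limit. -/

theorem div_sum_le_one {ι : Type*} [Fintype ι] {f : ι → ℝ} (hf : ∀ j, 0 ≤ f j) (i : ι) :
    f i / ∑ j, f j ≤ 1 :=
  div_le_one_of_le₀ (single_le_sum (fun j _ => hf j) (mem_univ i)) (sum_nonneg fun j _ => hf j)

theorem tendsto_exp_neg_mul_atTop_nhds_zero {c : ℝ} (hc : 0 < c) :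
    Tendsto (fun γ : ℝ => exp (-γ * c)) atTop (nhds 0) :=
  tendsto_exp_atBot.comp (tendsto_neg_atTop_atBot.atBot_mul_const hc)

theorem tendsto_sum_exp_neg_mul_dist_mul {A : Type*} [MetricSpace A] {V : Type*} [Fintype V]
    {χ : V → A} (hχ : Function.Injective χ) (β : V → ℝ) (i : V) :
    Tendsto (fun γ : ℝ => ∑ j, exp (-γ * dist (χ j) (χ i)) * β j) atTop (nhds (β i)) := by
  classical
  have hterm : ∀ j, Tendsto (fun γ : ℝ => exp (-γ * dist (χ j) (χ i)) * β j) atTop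
      (nhds (if j = i then β i else 0)) := by
    intro j
    rcases eq_or_ne j i with rfl | hji
    · simp
    · have hdist : 0 < dist (χ j) (χ i) := dist_pos.mpr (hχ.ne hji)
      simpa [hji] using (tendsto_exp_neg_mul_atTop_nhds_zero hdist).mul_const (β j)
  simpa using tendsto_finsetSum univ fun j _ => hterm j

theorem tendsto_local_visibility_atTop {A : Type*} [MetricSpace A] {V : Type*} [Fintype V]
    {χ : V → A} (hχ : Function.Injective χ) {β : V → ℝ} {i : V} (hβi : β i ≠ 0) :
    Tendsto (fun γ : ℝ => exp (-γ * dist (χ i) (χ i)) * β i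
        / ∑ j, exp (-γ * dist (χ j) (χ i)) * β j) atTop (nhds 1) := by
  simpa [hβi, Pi.div_def] using
    (tendsto_const_nhds (x := β i)).div (tendsto_sum_exp_neg_mul_dist_mul hχ β i) hβi

theorem spatial_max_visibility_tendsto_one_general
    {A : Type*} [MetricSpace A] {V : Type*} [Fintype V]
    (χ : V → A) (hχ : Function.Injective χ)
    (β : V → ℝ) (hβ : ∀ j, 0 < β j) (i : V) :
    Tendsto (fun γ : ℝ =>
        ⨆ x : A, Real.exp (-γ * dist (χ i) x) * β i
          / ∑ j, Real.exp (-γ * dist (χ j) x) * β j)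
      atTop (nhds 1) := by
  have : Nonempty A := ⟨χ i⟩
  have hle_one : ∀ (γ : ℝ) (x : A), exp (-γ * dist (χ i) x) * β i
      / ∑ j, exp (-γ * dist (χ j) x) * β j ≤ 1 := fun γ x =>
    div_sum_le_one (f := fun j => exp (-γ * dist (χ j) x) * β j)
      (fun j => (mul_pos (exp_pos _) (hβ j)).le) i
  exact tendsto_of_tendsto_of_tendsto_of_le_of_le
    (tendsto_local_visibility_atTop hχ (hβ i).ne') tendsto_const_nhds
    (fun γ => le_ciSup ⟨1, Set.forall_mem_range.mpr (hle_one γ)⟩ (χ i))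
    (fun γ => ciSup_le (hle_one γ))

/-- Lemma 3, second part: in the spatial model with distinct node locations, the maximum
visibility `p_i^{max}(γ) = ⨆ x, r_i(γ, x)` of node `i` tends to `1` as the decay
parameter tends to infinity. -/
theorem spatial_max_visibility_tendsto_one
    {A : Type*} [MetricSpace A] [Nonempty A] {V : Type*} [Fintype V]
    (hV : 2 ≤ Fintype.card V)
    (χ : V → A) (hχ : Function.Injective χ)
    (β : V → ℝ) (hβ : ∀ j, 0 < β j) (i : V) :
    Tendsto (fun γ : ℝ =>
        ⨆ x : A, Real.exp (-γ * dist (χ i) x) * β i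
          / ∑ j, Real.exp (-γ * dist (χ j) x) * β j)
      atTop (nhds 1) :=
  spatial_max_visibility_tendsto_one_general χ hχ β hβ i
end

section
/- (Pointwise bound in the proof of Lemma 4) In the spatial model, for every ε > 0, every γ ≥ 0, and every point x ∈ A with dist(χ_i, x) < ε, the attachment ratio satisfies r_i(γ, x) ≥ exp(−2γε) · p_i^{local}(γ). -/
/-!
Moving the evaluation point from `y` to `x` changes every distance `dist (χ j) ·` by at most
`dist x y`, so every spatial weight `exp (-γ · dist (χ j) ·) · β j` changes by a factor between
`exp (-γ · dist x y)` and `exp (γ · dist x y)`. Hence the numerator of the attachment ratio loses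
at most one such factor and the denominator gains at most one, so the ratio at `x` is at least
`exp (-2γ · dist x y)` times the ratio at `y`. Taking `y = χ i` gives the local visibility.
-/

open Finset Real

namespace SpatialGrowth

variable {A : Type*} [PseudoMetricSpace A] {V : Type*}

noncomputable def weight (χ : V → A) (β : V → ℝ) (γ : ℝ) (x : A) (j : V) : ℝ :=
  exp (-γ * dist (χ j) x) * β j

variable {χ : V → A} {β : V → ℝ} {γ : ℝ}

theorem weight_pos (hβ : ∀ j, 0 < β j) (x : A) (j : V) : 0 < weight χ β γ x j :=
  mul_pos (exp_pos _) (hβ j)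

theorem weight_le_exp_mul_weight {j : V} (hβ : 0 ≤ β j) (hγ : 0 ≤ γ) (x y : A) :
    weight χ β γ x j ≤ exp (γ * dist x y) * weight χ β γ y j := by
  rw [weight, weight, ← mul_assoc, ← exp_add]
  refine mul_le_mul_of_nonneg_right (exp_le_exp.2 ?_) hβ
  nlinarith [dist_triangle (χ j) x y]

variable [Fintype V]

noncomputable def attachmentRatio (χ : V → A) (β : V → ℝ) (γ : ℝ) (x : A) (i : V) : ℝ :=
  weight χ β γ x i / ∑ j, weight χ β γ x j

theorem attachmentRatio_nonneg (hβ : ∀ j, 0 < β j) (x : A) (i : V) :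
    0 ≤ attachmentRatio χ β γ x i :=
  div_nonneg (weight_pos hβ x i).le (sum_nonneg fun j _ ↦ (weight_pos hβ x j).le)

theorem sum_weight_le_exp_mul_sum_weight (hβ : ∀ j, 0 ≤ β j) (hγ : 0 ≤ γ) (x y : A) :
    ∑ j, weight χ β γ x j ≤ exp (γ * dist x y) * ∑ j, weight χ β γ y j := by
  rw [mul_sum]
  exact sum_le_sum fun j _ ↦ weight_le_exp_mul_weight (hβ j) hγ x y

theorem exp_mul_attachmentRatio_le (hβ : ∀ j, 0 < β j) (hγ : 0 ≤ γ) (x y : A) (i : V) :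
    exp (-(2 * γ * dist x y)) * attachmentRatio χ β γ y i ≤ attachmentRatio χ β γ x i := by
  have hβ₀ : ∀ j, 0 ≤ β j := fun j ↦ (hβ j).le
  have hnum : exp (-(γ * dist x y)) * weight χ β γ y i ≤ weight χ β γ x i := by
    rw [exp_neg, inv_mul_le_iff₀ (exp_pos _), dist_comm]
    exact weight_le_exp_mul_weight (hβ i).le hγ y x
  have hden_pos : 0 < ∑ j, weight χ β γ x j :=
    sum_pos (fun j _ ↦ weight_pos hβ x j) ⟨i, mem_univ i⟩
  calc exp (-(2 * γ * dist x y)) * attachmentRatio χ β γ y i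
      = exp (-(γ * dist x y)) * weight χ β γ y i
          / (exp (γ * dist x y) * ∑ j, weight χ β γ y j) := by
        rw [attachmentRatio, mul_div_assoc', mul_div_mul_comm, ← exp_sub]
        ring_nf
    _ ≤ weight χ β γ x i / (exp (γ * dist x y) * ∑ j, weight χ β γ y j) := by
        gcongr
        exact hden_pos.trans_le (sum_weight_le_exp_mul_sum_weight hβ₀ hγ x y) |>.le
    _ ≤ attachmentRatio χ β γ x i :=
        div_le_div_of_nonneg_left (weight_pos hβ x i).le hden_pos
          (sum_weight_le_exp_mul_sum_weight hβ₀ hγ x y)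

theorem attachmentRatio_self (i : V) :
    attachmentRatio χ β γ (χ i) i = β i / ∑ j, exp (-γ * dist (χ j) (χ i)) * β j := by
  simp [attachmentRatio, weight]

end SpatialGrowth

open SpatialGrowth in
theorem spatial_attachment_ratio_pointwise_bound_general
    {A : Type*} [MetricSpace A] {V : Type*} [Fintype V]
    (χ : V → A) (β : V → ℝ) (hβ : ∀ j, 0 < β j)
    (ε : ℝ) (γ : ℝ) (hγ : 0 ≤ γ) (i : V)
    (x : A) (hx : dist (χ i) x < ε) :
    Real.exp (-γ * dist (χ i) x) * β i / (∑ j, Real.exp (-γ * dist (χ j) x) * β j)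
      ≥ Real.exp (-(2 * γ * ε)) *
          (β i / ∑ j, Real.exp (-γ * dist (χ j) (χ i)) * β j) := by
  rw [← attachmentRatio_self (γ := γ)]
  calc exp (-(2 * γ * ε)) * attachmentRatio χ β γ (χ i) i
      ≤ exp (-(2 * γ * dist x (χ i))) * attachmentRatio χ β γ (χ i) i := by
        gcongr
        · exact attachmentRatio_nonneg hβ (χ i) i
        · rw [dist_comm]; exact hx.le
    _ ≤ attachmentRatio χ β γ x i := exp_mul_attachmentRatio_le hβ hγ x (χ i) i

/-- Pointwise bound in the proof of Lemma 4: in the spatial model, for every `ε > 0`,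
every `γ ≥ 0`, and every point `x` with `dist (χ i) x < ε`, the attachment ratio
satisfies `r_i(γ, x) ≥ exp (-2γε) · p_i^{local}(γ)`. -/
theorem spatial_attachment_ratio_pointwise_bound
    {A : Type*} [MetricSpace A] {V : Type*} [Fintype V] [Nonempty V]
    (χ : V → A) (β : V → ℝ) (hβ : ∀ j, 0 < β j)
    (ε : ℝ) (hε : 0 < ε) (γ : ℝ) (hγ : 0 ≤ γ) (i : V)
    (x : A) (hx : dist (χ i) x < ε) :
    Real.exp (-γ * dist (χ i) x) * β i / (∑ j, Real.exp (-γ * dist (χ j) x) * β j)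
      ≥ Real.exp (-(2 * γ * ε)) *
          (β i / ∑ j, Real.exp (-γ * dist (χ j) (χ i)) * β j) :=
  spatial_attachment_ratio_pointwise_bound_general χ β hβ ε γ hγ i x hx
end
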